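/- arXiv:2204.04176 — 2 statements merged into one kernel-verified Lean document; each statement's English description precedes it below -/
import Mathlib

section
/- Let P = (p_1, ..., p_L) be a shortest path in a simple graph G and let v be a vertex not on P. Then v is adjacent to at most 3 vertices of P, and if it is adjacent to exactly 3 path vertices, those vertices are consecutive on P (of the form p_{i-1}, p_i, p_{i+1}). -/
private lemma aux_dist_triangle {V : Type*} (G : SimpleGraph V) {u v w : V}
    (h1 : G.Reachable u v) (h2 : G.Reachable v w) :
    G.dist u w ≤ G.dist u v + G.dist v w := by
  obtain ⟨P, hP⟩ := h1.exists_walk_length_eq_dist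
  obtain ⟨Q, hQ⟩ := h2.exists_walk_length_eq_dist
  rw [← hP, ← hQ, ← SimpleGraph.Walk.length_append]
  exact SimpleGraph.dist_le _

private lemma aux_reach_dist {V : Type*} (G : SimpleGraph V) (L : ℕ) (p : ℕ → V)
    (hadj : ∀ i, i + 1 < L → G.Adj (p i) (p (i + 1))) :
    ∀ k i, i + k < L → G.Reachable (p i) (p (i + k)) ∧ G.dist (p i) (p (i + k)) ≤ k := by
  intro k
  induction k with
  | zero =>
    intro i _
    rw [Nat.add_zero]
    exact ⟨SimpleGraph.Reachable.refl _, by simp⟩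
  | succ n ih =>
    intro i h
    have h' : i + n < L := by omega
    obtain ⟨hr, hd⟩ := ih i h'
    have hadj' : G.Adj (p (i + n)) (p (i + n + 1)) := hadj (i + n) (by omega)
    have hr2 : G.Reachable (p (i + n)) (p (i + n + 1)) := hadj'.reachable
    refine ⟨hr.trans hr2, ?_⟩
    have tri := aux_dist_triangle G hr hr2
    have hd2 : G.dist (p (i + n)) (p (i + n + 1)) = 1 :=
      SimpleGraph.dist_eq_one_iff_adj.mpr hadj'
    rw [hd2] at tri
    show G.dist (p i) (p (i + n + 1)) ≤ n + 1
    omega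

/-- A vertex off a shortest path is adjacent to at most 3 path vertices, and if it is
adjacent to exactly 3, they are consecutive on the path. -/
theorem off_path_at_most_three_consecutive_neighbors
    {V : Type*} [Fintype V] [DecidableEq V] (G : SimpleGraph V) [DecidableRel G.Adj]
    (L : ℕ) (hL : 1 ≤ L)
    (p : ℕ → V)
    (hadj : ∀ i, i + 1 < L → G.Adj (p i) (p (i + 1)))
    (hshort : G.dist (p 0) (p (L - 1)) = L - 1)
    (v : V) (hv : ∀ i, i < L → v ≠ p i) :
    ((Finset.range L).filter (fun i => G.Adj v (p i))).card ≤ 3 ∧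
    (((Finset.range L).filter (fun i => G.Adj v (p i))).card = 3 →
      ∃ i, 1 ≤ i ∧ i + 1 < L ∧
        (Finset.range L).filter (fun i => G.Adj v (p i)) = {i - 1, i, i + 1}) := by
  -- key: any two neighbor indices differ by at most 2
  have key : ∀ i j, i ≤ j → j < L → G.Adj v (p i) → G.Adj v (p j) → j - i ≤ 2 := by
    intro i j hij hjL hi hj
    -- lower bound on dist (p i) (p j)
    have h1 := aux_reach_dist G L p hadj i 0 (by omega)
    have h2 := aux_reach_dist G L p hadj (j - i) i (by omega)
    have h3 := aux_reach_dist G L p hadj (L - 1 - j) j (by omega)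
    rw [show 0 + i = i by ring] at h1
    rw [show i + (j - i) = j by omega] at h2
    rw [show j + (L - 1 - j) = L - 1 by omega] at h3
    have tri1 : G.dist (p 0) (p (L - 1)) ≤ G.dist (p 0) (p i) + G.dist (p i) (p (L - 1)) :=
      aux_dist_triangle G h1.1 (h2.1.trans h3.1)
    have tri2 : G.dist (p i) (p (L - 1)) ≤ G.dist (p i) (p j) + G.dist (p j) (p (L - 1)) :=
      aux_dist_triangle G h2.1 h3.1
    -- upper bound: dist (p i) (p j) ≤ 2 via v
    have d1 : G.dist (p i) v = 1 := SimpleGraph.dist_eq_one_iff_adj.mpr hi.symm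
    have d2 : G.dist v (p j) = 1 := SimpleGraph.dist_eq_one_iff_adj.mpr hj
    have ub : G.dist (p i) (p j) ≤ 2 := by
      have := aux_dist_triangle G hi.symm.reachable hj.reachable
      omega
    omega
  set S := (Finset.range L).filter (fun i => G.Adj v (p i)) with hS
  have hmem : ∀ i ∈ S, i < L ∧ G.Adj v (p i) := by
    intro i hi
    simp only [hS, Finset.mem_filter, Finset.mem_range] at hi
    exact hi
  by_cases hne : S.Nonempty
  · obtain ⟨m, hmS, hmin⟩ := S.exists_min_image id hne
    have hsub : S ⊆ Finset.Icc m (m + 2) := by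
      intro j hj
      have hjm := hmin j hj
      simp only [id_eq] at hjm
      obtain ⟨hjL, hja⟩ := hmem j hj
      obtain ⟨_, hma⟩ := hmem m hmS
      have := key m j hjm hjL hma hja
      simp only [Finset.mem_Icc]; omega
    have hcard : S.card ≤ 3 := by
      have := Finset.card_le_card hsub
      rw [Nat.card_Icc] at this
      omega
    refine ⟨hcard, fun h3 => ?_⟩
    have hIcc : (Finset.Icc m (m + 2)).card = 3 := by rw [Nat.card_Icc]; omega
    have hSeq : S = Finset.Icc m (m + 2) :=
      Finset.eq_of_subset_of_card_le hsub (by omega)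
    have hm2 : m + 2 ∈ S := by rw [hSeq]; simp
    have hm2L : m + 2 < L := (hmem _ hm2).1
    refine ⟨m + 1, by omega, by omega, ?_⟩
    show S = {m + 1 - 1, m + 1, m + 1 + 1}
    rw [hSeq]
    ext x
    simp only [Finset.mem_Icc, Finset.mem_insert, Finset.mem_singleton]
    omega
  · rw [Finset.not_nonempty_iff_eq_empty] at hne
    rw [hne]
    simp
end

section
/- Let P = (p_1, ..., p_L) be a shortest path in G, let v_A be any vertex (the adversary position), and let p_l be a path vertex (the platoon center). Define d^A_i = d(p_i, v_A) and d^D_i = d(p_i, p_l), and the advantage a_i = d^A_i - d^D_i. Then there cannot exist indices i < l < j with a_i < 0 and a_j ≤ 0: i.e., a strictly negative advantage on one side of the platoon and a nonpositive advantage on the other side is impossible. -/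
/-- On a shortest path, a strictly negative advantage on one side of the platoon center
and a nonpositive advantage on the other side is impossible. -/
theorem no_negative_advantage_both_sides
    {V : Type*} [Fintype V] (G : SimpleGraph V) (hG : G.Connected)
    (L : ℕ) (hL : 1 ≤ L)
    (p : ℕ → V)
    (hadj : ∀ i, i + 1 < L → G.Adj (p i) (p (i + 1)))
    (hshort : G.dist (p 0) (p (L - 1)) = L - 1)
    (vA : V) (l i j : ℕ) (hil : i < l) (hlj : l < j) (hjL : j < L)
    (a : ℕ → ℤ)
    (ha : ∀ m, a m = (G.dist (p m) vA : ℤ) - (G.dist (p m) (p l) : ℤ)) :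
    ¬ (a i < 0 ∧ a j ≤ 0) := by
  -- upper bound: dist along the path
  have hub : ∀ s k : ℕ, s + k < L → G.dist (p s) (p (s + k)) ≤ k := by
    intro s k
    induction k with
    | zero => intro _; simp
    | succ n ih =>
      intro h
      have h1 : s + n < L := by omega
      have h2 : G.Adj (p (s + n)) (p (s + n + 1)) := hadj (s + n) (by omega)
      have h3 : G.dist (p (s + n)) (p (s + n + 1)) = 1 :=
        (SimpleGraph.dist_eq_one_iff_adj).mpr h2
      calc G.dist (p s) (p (s + (n + 1)))
          ≤ G.dist (p s) (p (s + n)) + G.dist (p (s + n)) (p (s + n + 1)) := by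
            have := hG.dist_triangle (u := p s) (v := p (s + n)) (w := p (s + (n+1)))
            simpa [Nat.add_assoc] using this
        _ ≤ n + 1 := by rw [h3]; exact Nat.add_le_add_right (ih h1) 1
  have hub' : ∀ s t : ℕ, s ≤ t → t < L → G.dist (p s) (p t) ≤ t - s := by
    intro s t hst htL
    have := hub s (t - s) (by omega)
    rwa [Nat.add_sub_cancel' hst] at this
  -- exact distance on the path
  have hexact : ∀ s t : ℕ, s ≤ t → t < L → G.dist (p s) (p t) = t - s := by
    intro s t hst htL
    refine le_antisymm (hub' s t hst htL) ?_
    by_contra hlt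
    push_neg at hlt
    have h1 : G.dist (p 0) (p s) ≤ s := hub' 0 s (Nat.zero_le _) (by omega)
    have h2 : G.dist (p t) (p (L - 1)) ≤ (L - 1) - t := hub' t (L - 1) (by omega) (by omega)
    have h3 : G.dist (p 0) (p (L - 1)) ≤ G.dist (p 0) (p s) + G.dist (p s) (p (L - 1)) :=
      hG.dist_triangle
    have h4 : G.dist (p s) (p (L - 1)) ≤ G.dist (p s) (p t) + G.dist (p t) (p (L - 1)) :=
      hG.dist_triangle
    omega
  rintro ⟨hai, haj⟩
  rw [ha i] at hai
  rw [ha j] at haj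
  have hdi : G.dist (p i) (p l) = l - i := hexact i l (le_of_lt hil) (by omega)
  have hdj : G.dist (p j) (p l) = j - l := by
    rw [SimpleGraph.dist_comm]; exact hexact l j (le_of_lt hlj) hjL
  have hdij : G.dist (p i) (p j) = j - i := hexact i j (by omega) hjL
  have htri : G.dist (p i) (p j) ≤ G.dist (p i) vA + G.dist vA (p j) := hG.dist_triangle
  have hcomm : G.dist vA (p j) = G.dist (p j) vA := SimpleGraph.dist_comm ..
  have hi' : G.dist (p i) vA < l - i := by omega
  have hj' : G.dist (p j) vA ≤ j - l := by omega
  omega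
end
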